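/- Every G⁰-algebra is a meet semilattice where the infimum is given by x ∧ y = ∼(∼x ∨ ∼y) = (((x ≻ 0) ≻ (y ≻ 0)) ≻ (y ≻ 0)) ≻ 0. -/

import Mathlib

/-!
The join `a ∨ b = (a ≻ b) ≻ b` is a least upper bound, and since `0` is the least element,
`∼∼x = x ∨ 0 = x`: complementation is an order-reversing involution. It therefore carries the
join of `∼x` and `∼y` to the meet of `x` and `y`.
-/

class GAlgebra (A : Type*) where
  succ : A → A → A
  one : A
  g1 : ∀ x, succ one x = x
  g2 : ∀ x, succ x one = one
  g3 : ∀ x y, succ (succ x y) y = succ (succ y x) x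
  g4 : ∀ x y z, succ x (succ y z) = one → succ y (succ x z) = one

open GAlgebra

local infixr:70 " ≻ " => GAlgebra.succ

class G0Algebra (A : Type*) extends GAlgebra A where
  zero : A
  g17 : ∀ x, succ zero x = one

open G0Algebra

namespace GAlgebra

variable {A : Type*} [GAlgebra A]

lemma succ_self (a : A) : a ≻ a = (one : A) := by
  simpa only [g2, g1] using (g3 a (one : A)).symm

lemma succ_succ_self (a b : A) : a ≻ (b ≻ a) = (one : A) :=
  g4 b a a (by rw [succ_self, g2])

lemma le_join_left (a b : A) : a ≻ ((a ≻ b) ≻ b) = (one : A) :=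
  g4 (a ≻ b) a b (succ_self _)

lemma le_join_right (a b : A) : b ≻ ((a ≻ b) ≻ b) = (one : A) :=
  succ_succ_self b (a ≻ b)

lemma join_eq_of_le {b c : A} (h : b ≻ c = (one : A)) : (c ≻ b) ≻ b = c := by
  rw [g3, h, g1]

lemma join_succ_right (a b : A) : ((a ≻ b) ≻ b) ≻ b = a ≻ b := by
  rw [g3 (a ≻ b) b, succ_succ_self, g1]

lemma join_le {a b c : A} (ha : a ≻ c = (one : A)) (hb : b ≻ c = (one : A)) :
    ((a ≻ b) ≻ b) ≻ c = (one : A) := by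
  -- `c = (c ≻ b) ≻ b`, so it suffices to bound the join by `(c ≻ b) ≻ b`
  have hcb : (c ≻ b) ≻ (a ≻ b) = (one : A) :=
    g4 a (c ≻ b) b (by rwa [join_eq_of_le hb])
  have h : ((a ≻ b) ≻ b) ≻ ((c ≻ b) ≻ b) = (one : A) :=
    g4 (c ≻ b) ((a ≻ b) ≻ b) b (by rwa [join_succ_right])
  rwa [join_eq_of_le hb] at h

end GAlgebra

namespace G0Algebra

variable {A : Type*} [G0Algebra A]

lemma compl_compl (a : A) : (a ≻ (zero : A)) ≻ (zero : A) = a :=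
  join_eq_of_le (g17 a)

lemma le_compl_comm {a b : A} (h : a ≻ (b ≻ (zero : A)) = (one : A)) :
    b ≻ (a ≻ (zero : A)) = (one : A) :=
  g4 a b (zero : A) h

lemma compl_antitone {a b : A} (h : a ≻ b = (one : A)) :
    (b ≻ (zero : A)) ≻ (a ≻ (zero : A)) = (one : A) :=
  le_compl_comm (by rwa [compl_compl])

lemma compl_le_of_compl_le {a b : A} (h : (a ≻ (zero : A)) ≻ b = (one : A)) :
    (b ≻ (zero : A)) ≻ a = (one : A) := by
  simpa only [compl_compl] using compl_antitone h

end G0Algebra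

theorem stmt11 {A : Type*} [G0Algebra A] (x y : A) :
    let m := (((x ≻ (zero : A)) ≻ (y ≻ (zero : A))) ≻ (y ≻ (zero : A))) ≻ (zero : A)
    m ≻ x = (one : A) ∧ m ≻ y = (one : A) ∧
    ∀ z : A, z ≻ x = (one : A) → z ≻ y = (one : A) → z ≻ m = (one : A) :=
  ⟨compl_le_of_compl_le (le_join_left _ _), compl_le_of_compl_le (le_join_right _ _),
    fun _ hx hy => le_compl_comm (join_le (compl_antitone hx) (compl_antitone hy))⟩
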